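/- Kantorovich–Newton convergence (Gragg–Tapia form): Let D ⊆ ℝⁿ be open convex, F : D → ℝⁿ differentiable with Jacobian F′ Lipschitz on D with constant L (in the sense ‖[F′(x)]v − [F′(y)]v‖_∞ ≤ L‖x−y‖_∞‖v‖_∞). Suppose x₀ ∈ D, [F′(x₀)]⁻¹ exists, ‖[F′(x₀)]⁻¹‖_∞ ≤ ℵ, ‖[F′(x₀)]⁻¹F(x₀)‖_∞ ≤ δ, ρ = 2ℵLδ ≤ 1, and B(x₀, t*) ⊆ D where t* = 2δ/(1+√(1−ρ)). Then the Newton iterates x_{k+1} = x_k − [F′(x_k)]⁻¹F(x_k) are well defined, remain in B(x₀,t*), converge to some x* ∈ closure(B(x₀,t*)), and F(x*) = 0. -/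

import Mathlib

open Metric Filter Set
open scoped Matrix

/-!
Precondition by `A = F′(x₀)⁻¹` and put `K = ℵL`. The Newton iterates `xₖ` are majorized by the
scalar Newton iterates `tₖ` for `p(t) = K t²/2 - t + δ` started at `0`, which increase to the
smaller root `t*` of `p`: inductively `‖xₖ - x₀‖ ≤ tₖ` and `‖A F(xₖ)‖ ≤ p(tₖ)`. Indeed, the
perturbation (Banach) lemma makes `A F′(xₖ)` invertible with inverse of norm at most
`1 / (1 - K tₖ) = -1 / p′(tₖ)`, so `‖xₖ₊₁ - xₖ‖ ≤ tₖ₊₁ - tₖ`; and since `xₖ₊₁` cancels the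
linearisation of `F` at `xₖ`, the Taylor bound for a Lipschitz derivative gives
`‖A F(xₖ₊₁)‖ ≤ K/2 ‖xₖ₊₁ - xₖ‖² ≤ K/2 (tₖ₊₁ - tₖ)² = p(tₖ₊₁)`. Hence `(xₖ)` is Cauchy, stays in
`B(x₀, t*)`, and `A F(xₖ) → p(t*) = 0`.
-/

noncomputable def newtonStep {n : ℕ} (F : (Fin n → ℝ) → (Fin n → ℝ))
    (F' : (Fin n → ℝ) → Matrix (Fin n) (Fin n) ℝ) (x : Fin n → ℝ) : Fin n → ℝ :=
  x - (F' x)⁻¹.mulVec (F x)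

namespace Kantorovich

noncomputable def poly (K δ t : ℝ) : ℝ := K / 2 * t ^ 2 - t + δ

/-- The smaller root `(1 - √(1 - 2Kδ)) / K` of `poly K δ`, rationalised. -/
noncomputable def radius (K δ : ℝ) : ℝ := 2 * δ / (1 + √(1 - 2 * K * δ))

/-- Newton's method for `poly K δ`, whose derivative is `K t - 1`, started at `0`. -/
noncomputable def newtonSeq (K δ : ℝ) : ℕ → ℝ
  | 0 => 0
  | k + 1 => newtonSeq K δ k + poly K δ (newtonSeq K δ k) / (1 - K * newtonSeq K δ k)

variable {K δ : ℝ}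

theorem continuous_poly : Continuous (poly K δ) := by
  unfold poly; fun_prop

theorem poly_newton {s : ℝ} (hs : 1 - K * s ≠ 0) :
    poly K δ (s + poly K δ s / (1 - K * s)) = K / 2 * (poly K δ s / (1 - K * s)) ^ 2 := by
  unfold poly
  field_simp
  ring

theorem newtonSeq_succ_sub (k : ℕ) :
    newtonSeq K δ (k + 1) - newtonSeq K δ k
      = poly K δ (newtonSeq K δ k) / (1 - K * newtonSeq K δ k) :=
  add_sub_cancel_left _ _

theorem radius_pos (hδ : 0 < δ) : 0 < radius K δ := by
  unfold radius; positivity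

theorem mul_radius (hKδ : 2 * K * δ ≤ 1) : K * radius K δ = 1 - √(1 - 2 * K * δ) := by
  have hσ : √(1 - 2 * K * δ) ^ 2 = 1 - 2 * K * δ := Real.sq_sqrt (by linarith)
  unfold radius
  set σ := √(1 - 2 * K * δ)
  have : 0 < 1 + σ := by positivity
  field_simp
  linear_combination hσ

theorem poly_eq (hKδ : 2 * K * δ ≤ 1) (s : ℝ) :
    poly K δ s = √(1 - 2 * K * δ) * (radius K δ - s) + K / 2 * (radius K δ - s) ^ 2 := by
  have hroot : radius K δ * (1 + √(1 - 2 * K * δ)) = 2 * δ :=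
    div_mul_cancel₀ _ (by positivity)
  unfold poly
  linear_combination (s - radius K δ / 2) * mul_radius hKδ - hroot / 2

theorem poly_radius (hKδ : 2 * K * δ ≤ 1) : poly K δ (radius K δ) = 0 := by
  simp [poly_eq hKδ]

theorem one_sub_mul_eq (hKδ : 2 * K * δ ≤ 1) (s : ℝ) :
    1 - K * s = √(1 - 2 * K * δ) + K * (radius K δ - s) := by
  linear_combination -mul_radius hKδ

theorem one_sub_mul_pos (hK : 0 < K) (hKδ : 2 * K * δ ≤ 1) {s : ℝ} (hs : s < radius K δ) :
    0 < 1 - K * s := by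
  rw [one_sub_mul_eq hKδ]
  have := sub_pos.2 hs
  positivity

theorem radius_sub_newton_eq (hK : 0 < K) (hKδ : 2 * K * δ ≤ 1) {s : ℝ} (hs : s < radius K δ) :
    radius K δ - (s + poly K δ s / (1 - K * s)) = K / 2 * (radius K δ - s) ^ 2 / (1 - K * s) := by
  have hne := (one_sub_mul_pos hK hKδ hs).ne'
  rw [eq_div_iff hne]
  linear_combination (radius K δ - s) * one_sub_mul_eq hKδ s
    - poly_eq hKδ s - div_mul_cancel₀ (poly K δ s) hne

theorem add_newton_lt_radius (hK : 0 < K) (hKδ : 2 * K * δ ≤ 1) {s : ℝ} (hs : s < radius K δ) :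
    s + poly K δ s / (1 - K * s) < radius K δ := by
  have := one_sub_mul_pos hK hKδ hs
  have := sub_pos.2 hs
  rw [← sub_pos, radius_sub_newton_eq hK hKδ hs]
  positivity

variable (hK : 0 < K) (hδ : 0 < δ) (hKδ : 2 * K * δ ≤ 1)
include hK hδ hKδ

theorem newtonSeq_lt_radius (k : ℕ) : newtonSeq K δ k < radius K δ := by
  induction k with
  | zero => exact radius_pos hδ
  | succ k ih => exact add_newton_lt_radius hK hKδ ih

theorem poly_newtonSeq_succ (k : ℕ) :
    poly K δ (newtonSeq K δ (k + 1)) = K / 2 * (newtonSeq K δ (k + 1) - newtonSeq K δ k) ^ 2 := by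
  rw [newtonSeq_succ_sub]
  exact poly_newton (one_sub_mul_pos hK hKδ (newtonSeq_lt_radius hK hδ hKδ k)).ne'

theorem radius_sub_newtonSeq_succ_le (k : ℕ) :
    radius K δ - newtonSeq K δ (k + 1) ≤ (radius K δ - newtonSeq K δ k) / 2 := by
  have hk := newtonSeq_lt_radius hK hδ hKδ k
  have hd := sub_pos.2 hk
  have hσ := Real.sqrt_nonneg (1 - 2 * K * δ)
  rw [newtonSeq, radius_sub_newton_eq hK hKδ hk, div_le_iff₀ (one_sub_mul_pos hK hKδ hk),
    one_sub_mul_eq hKδ]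
  nlinarith [mul_nonneg hσ hd.le]

theorem radius_sub_newtonSeq_le (k : ℕ) : radius K δ - newtonSeq K δ k ≤ radius K δ / 2 ^ k := by
  induction k with
  | zero => simp [newtonSeq]
  | succ k ih =>
    calc _ ≤ (radius K δ - newtonSeq K δ k) / 2 := radius_sub_newtonSeq_succ_le hK hδ hKδ k
      _ ≤ radius K δ / 2 ^ k / 2 := by gcongr
      _ = radius K δ / 2 ^ (k + 1) := by ring

theorem tendsto_newtonSeq : Tendsto (newtonSeq K δ) atTop (nhds (radius K δ)) := by
  have hgeom : Tendsto (fun k : ℕ => radius K δ / 2 ^ k) atTop (nhds 0) := by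
    simpa [div_eq_mul_inv] using (tendsto_pow_atTop_nhds_zero_of_lt_one (r := (1 / 2 : ℝ))
      (by norm_num) (by norm_num)).const_mul (radius K δ)
  have hgap : Tendsto (fun k => radius K δ - newtonSeq K δ k) atTop (nhds 0) :=
    squeeze_zero (fun k => (sub_pos.2 (newtonSeq_lt_radius hK hδ hKδ k)).le)
      (radius_sub_newtonSeq_le hK hδ hKδ) hgeom
  simpa using (tendsto_const_nhds (x := radius K δ)).sub hgap

end Kantorovich

namespace Matrix

variable {𝕜 ι : Type*} [NormedField 𝕜] [Fintype ι] {M : Matrix ι ι 𝕜} {q : ℝ}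

theorem one_sub_mul_norm_le_norm_mulVec (h : ∀ v, ‖v - M *ᵥ v‖ ≤ q * ‖v‖) (v : ι → 𝕜) :
    (1 - q) * ‖v‖ ≤ ‖M *ᵥ v‖ := by
  have := norm_sub_norm_le v (M *ᵥ v)
  linarith [h v]

theorem isUnit_det_of_norm_sub_mulVec_le [DecidableEq ι] (hq : q < 1)
    (h : ∀ v, ‖v - M *ᵥ v‖ ≤ q * ‖v‖) : IsUnit M.det := by
  rw [isUnit_iff_ne_zero]
  intro hdet
  obtain ⟨v, hv, hMv⟩ := exists_mulVec_eq_zero_iff.2 hdet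
  have := one_sub_mul_norm_le_norm_mulVec h v
  rw [hMv, norm_zero] at this
  have := norm_pos_iff.2 hv
  nlinarith

theorem norm_inv_mulVec_le_of_norm_sub_mulVec_le [DecidableEq ι] (hq : q < 1)
    (h : ∀ v, ‖v - M *ᵥ v‖ ≤ q * ‖v‖) (v : ι → 𝕜) : ‖M⁻¹ *ᵥ v‖ ≤ ‖v‖ / (1 - q) := by
  have hMM : M *ᵥ (M⁻¹ *ᵥ v) = v := by
    rw [mulVec_mulVec, mul_nonsing_inv _ (isUnit_det_of_norm_sub_mulVec_le hq h), one_mulVec]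
  rw [le_div_iff₀ (sub_pos.2 hq), mul_comm]
  simpa [hMM] using one_sub_mul_norm_le_norm_mulVec h (M⁻¹ *ᵥ v)

end Matrix

theorem Convex.norm_image_sub_sub_fderiv_le_of_lipschitz {E F : Type*} [NormedAddCommGroup E]
    [NormedSpace ℝ E] [NormedAddCommGroup F] [NormedSpace ℝ F] {f : E → F} {f' : E → E →L[ℝ] F}
    {s : Set E} {L : ℝ} (hs : Convex ℝ s) (hf : ∀ x ∈ s, HasFDerivWithinAt f (f' x) s x)
    (hL : ∀ x ∈ s, ∀ y ∈ s, ∀ v, ‖f' x v - f' y v‖ ≤ L * ‖x - y‖ * ‖v‖)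
    {x y : E} (hx : x ∈ s) (hy : y ∈ s) :
    ‖f y - f x - f' x (y - x)‖ ≤ L / 2 * ‖y - x‖ ^ 2 := by
  set u := y - x
  have hseg : MapsTo (fun t : ℝ => x + t • u) (Icc 0 1) s := fun t ht =>
    hs.add_smul_sub_mem hx hy ht
  have hderiv : ∀ t ∈ Icc (0 : ℝ) 1,
      HasDerivWithinAt (fun t => f (x + t • u) - f x - t • f' x u)
        (f' (x + t • u) u - f' x u) (Icc 0 1) t := by
    intro t ht
    have hline : HasDerivWithinAt (fun t : ℝ => x + t • u) u (Icc 0 1) t := by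
      simpa using ((hasDerivWithinAt_id t _).smul_const u).const_add x
    exact (((hf _ (hseg ht)).comp_hasDerivWithinAt t hline hseg).sub_const (f x)).sub
      (by simpa using (hasDerivWithinAt_id t _).smul_const (f' x u))
  have hB : ∀ t, HasDerivAt (fun t => L / 2 * ‖u‖ ^ 2 * t ^ 2) (L * ‖u‖ ^ 2 * t) t := fun t =>
    ((hasDerivAt_pow 2 t).const_mul (L / 2 * ‖u‖ ^ 2)).congr_deriv (by push_cast; ring)
  have hB' : ∀ t ∈ Ico (0 : ℝ) 1, ‖f' (x + t • u) u - f' x u‖ ≤ L * ‖u‖ ^ 2 * t := by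
    intro t ht
    have := hL _ (hseg (Ico_subset_Icc_self ht)) x hx u
    rw [add_sub_cancel_left, norm_smul, Real.norm_of_nonneg ht.1] at this
    linarith
  have hbound := image_norm_le_of_norm_deriv_right_le_deriv_boundary
    (fun t ht => (hderiv t ht).continuousWithinAt)
    (fun t ht => (hderiv t (Ico_subset_Icc_self ht)).mono_of_mem_nhdsWithin
      (Icc_mem_nhdsGE_of_mem ht))
    (by simp) hB hB' (right_mem_Icc.2 zero_le_one)
  simpa [u] using hbound

section NewtonIteration

open Kantorovich

variable {n : ℕ} {F : (Fin n → ℝ) → (Fin n → ℝ)} {F' : (Fin n → ℝ) → Matrix (Fin n) (Fin n) ℝ}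
  {A : Matrix (Fin n) (Fin n) ℝ} {x₀ : Fin n → ℝ} {K δ : ℝ}

theorem newtonStep_sub_self (hA : IsUnit A.det) (x : Fin n → ℝ) :
    newtonStep F F' x - x = -((A * F' x)⁻¹ *ᵥ (A *ᵥ F x)) := by
  rw [newtonStep, Matrix.mul_inv_rev, ← Matrix.mulVec_mulVec, Matrix.mulVec_mulVec _ A⁻¹,
    Matrix.nonsing_inv_mul _ hA, Matrix.one_mulVec]
  abel

-- The affine-invariant Kantorovich hypotheses: `A` stands for `F′(x₀)⁻¹` and `K` for `ℵL`.
variable (hK : 0 < K) (hKδ : 2 * K * δ ≤ 1) (hA : IsUnit A.det)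
  (hpert : ∀ x ∈ closedBall x₀ (radius K δ), ∀ v,
    ‖v - (A * F' x) *ᵥ v‖ ≤ K * ‖x - x₀‖ * ‖v‖)
  (hquad : ∀ x ∈ closedBall x₀ (radius K δ), ∀ y ∈ closedBall x₀ (radius K δ),
    ‖A *ᵥ (F y - F x - F' x *ᵥ (y - x))‖ ≤ K / 2 * ‖y - x‖ ^ 2)
include hK hKδ hA hpert hquad

theorem newtonStep_estimate {x : Fin n → ℝ} {s : ℝ} (hs : s < radius K δ)
    (hxs : ‖x - x₀‖ ≤ s) (hFx : ‖A *ᵥ F x‖ ≤ poly K δ s) :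
    IsUnit (F' x).det ∧
      ‖newtonStep F F' x - x‖ ≤ poly K δ s / (1 - K * s) ∧
      ‖A *ᵥ F (newtonStep F F' x)‖ ≤ K / 2 * ‖newtonStep F F' x - x‖ ^ 2 := by
  set y := newtonStep F F' x
  have hx : x ∈ closedBall x₀ (radius K δ) := by
    rw [mem_closedBall, dist_eq_norm]; linarith
  have hKs : K * ‖x - x₀‖ ≤ K * s := mul_le_mul_of_nonneg_left hxs hK.le
  have hq : K * ‖x - x₀‖ < 1 := by linarith [one_sub_mul_pos hK hKδ hs]
  have hunit := Matrix.isUnit_det_of_norm_sub_mulVec_le hq (hpert x hx)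
  have hstep : ‖y - x‖ ≤ poly K δ s / (1 - K * s) := by
    rw [newtonStep_sub_self hA, norm_neg]
    calc _ ≤ ‖A *ᵥ F x‖ / (1 - K * ‖x - x₀‖) :=
          Matrix.norm_inv_mulVec_le_of_norm_sub_mulVec_le hq (hpert x hx) _
      _ ≤ poly K δ s / (1 - K * s) := by
          gcongr
          · exact (norm_nonneg _).trans hFx
          · linarith [one_sub_mul_pos hK hKδ hs]
  have hy : y ∈ closedBall x₀ (radius K δ) := by
    rw [mem_closedBall, dist_eq_norm]
    calc ‖y - x₀‖ ≤ ‖y - x‖ + ‖x - x₀‖ := norm_sub_le_norm_sub_add_norm_sub _ _ _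
      _ ≤ s + poly K δ s / (1 - K * s) := by linarith
      _ ≤ radius K δ := (add_newton_lt_radius hK hKδ hs).le
  have hlin : (A * F' x) *ᵥ (y - x) = -(A *ᵥ F x) := by
    rw [newtonStep_sub_self hA, Matrix.mulVec_neg, Matrix.mulVec_mulVec,
      Matrix.mul_nonsing_inv _ hunit, Matrix.one_mulVec]
  have hres : A *ᵥ (F y - F x - F' x *ᵥ (y - x)) = A *ᵥ F y := by
    rw [Matrix.mulVec_sub, Matrix.mulVec_sub, Matrix.mulVec_mulVec, hlin]
    abel
  refine ⟨?_, hstep, hres ▸ hquad x hx y hy⟩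
  rw [Matrix.det_mul] at hunit
  exact isUnit_of_mul_isUnit_right hunit

variable (hδ : 0 < δ) (hF₀ : ‖A *ᵥ F x₀‖ ≤ δ)
include hδ hF₀

theorem newton_iterate_majorized (k : ℕ) :
    ‖(newtonStep F F')^[k] x₀ - x₀‖ ≤ newtonSeq K δ k ∧
      ‖A *ᵥ F ((newtonStep F F')^[k] x₀)‖ ≤ poly K δ (newtonSeq K δ k) := by
  induction k with
  | zero => simpa [newtonSeq, poly] using hF₀
  | succ k ih =>
    obtain ⟨-, hstep, hres⟩ := newtonStep_estimate hK hKδ hA hpert hquad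
      (newtonSeq_lt_radius hK hδ hKδ k) ih.1 ih.2
    rw [← newtonSeq_succ_sub] at hstep
    rw [Function.iterate_succ_apply']
    refine ⟨?_, ?_⟩
    · calc _ ≤ ‖newtonStep F F' ((newtonStep F F')^[k] x₀) - (newtonStep F F')^[k] x₀‖
            + ‖(newtonStep F F')^[k] x₀ - x₀‖ := norm_sub_le_norm_sub_add_norm_sub _ _ _
        _ ≤ newtonSeq K δ (k + 1) := by linarith [ih.1]
    · rw [poly_newtonSeq_succ hK hδ hKδ]
      exact hres.trans (by gcongr)

theorem newton_kantorovich (hcont : ContinuousOn F (closedBall x₀ (radius K δ))) :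
    (∀ k, (newtonStep F F')^[k] x₀ ∈ closedBall x₀ (radius K δ) ∧
      IsUnit (F' ((newtonStep F F')^[k] x₀)).det) ∧
    ∃ xstar ∈ closedBall x₀ (radius K δ),
      Tendsto (fun k => (newtonStep F F')^[k] x₀) atTop (nhds xstar) ∧ F xstar = 0 := by
  set X := fun k => (newtonStep F F')^[k] x₀
  have hbounds := newton_iterate_majorized hK hKδ hA hpert hquad hδ hF₀
  have hlt := newtonSeq_lt_radius hK hδ hKδ
  have hstep k := newtonStep_estimate hK hKδ hA hpert hquad (hlt k) (hbounds k).1 (hbounds k).2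
  have hmem k : X k ∈ closedBall x₀ (radius K δ) := by
    rw [mem_closedBall, dist_eq_norm]
    exact (hbounds k).1.trans (hlt k).le
  have hcauchy : CauchySeq X := by
    refine cauchySeq_of_le_geometric_two (C := 2 * radius K δ) fun k => ?_
    rw [dist_comm, dist_eq_norm]
    calc ‖X (k + 1) - X k‖ ≤ newtonSeq K δ (k + 1) - newtonSeq K δ k := by
          rw [newtonSeq_succ_sub, show X (k + 1) = newtonStep F F' (X k) from
            Function.iterate_succ_apply' _ _ _]
          exact (hstep k).2.1
      _ ≤ radius K δ - newtonSeq K δ k := by linarith [hlt (k + 1)]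
      _ ≤ radius K δ / 2 ^ k := radius_sub_newtonSeq_le hK hδ hKδ k
      _ = 2 * radius K δ / 2 / 2 ^ k := by ring
  obtain ⟨xstar, hlim⟩ := cauchySeq_tendsto_of_complete hcauchy
  have hxstar : xstar ∈ closedBall x₀ (radius K δ) :=
    isClosed_closedBall.mem_of_tendsto hlim (Eventually.of_forall hmem)
  have hres_zero : Tendsto (fun k => A *ᵥ F (X k)) atTop (nhds 0) := by
    have hpoly := ((continuous_poly (K := K) (δ := δ)).tendsto _).comp (tendsto_newtonSeq hK hδ hKδ)
    rw [poly_radius hKδ] at hpoly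
    exact squeeze_zero_norm (fun k => (hbounds k).2) hpoly
  have hres_lim : Tendsto (fun k => A *ᵥ F (X k)) atTop (nhds (A *ᵥ F xstar)) :=
    ((continuous_const.matrix_mulVec continuous_id).tendsto _).comp
      ((hcont xstar hxstar).tendsto.comp
        (tendsto_nhdsWithin_iff.2 ⟨hlim, Eventually.of_forall hmem⟩))
  have hAF : A *ᵥ F xstar = 0 := tendsto_nhds_unique hres_lim hres_zero
  refine ⟨fun k => ⟨hmem k, (hstep k).1⟩, xstar, hxstar, hlim, ?_⟩
  rw [← Matrix.one_mulVec (F xstar), ← Matrix.nonsing_inv_mul A hA, ← Matrix.mulVec_mulVec, hAF,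
    Matrix.mulVec_zero]

end NewtonIteration

theorem stmt_16_general {n : ℕ} (D : Set (Fin n → ℝ))
    (F : (Fin n → ℝ) → (Fin n → ℝ)) (F' : (Fin n → ℝ) → Matrix (Fin n) (Fin n) ℝ)
    (hF : ∀ x ∈ D, HasFDerivAt F
      (LinearMap.toContinuousLinearMap ((F' x).mulVecLin)) x)
    (L : ℝ) (hL : 0 < L)
    (hLip : ∀ x ∈ D, ∀ y ∈ D, ∀ v : Fin n → ℝ,
      ‖(F' x).mulVec v - (F' y).mulVec v‖ ≤ L * ‖x - y‖ * ‖v‖)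
    (x₀ : Fin n → ℝ) (hx₀ : x₀ ∈ D)
    (hinv : IsUnit (F' x₀).det)
    (ℵ δ : ℝ) (hℵ : 0 < ℵ) (hδ : 0 < δ)
    (hbound : ∀ v : Fin n → ℝ, ‖(F' x₀)⁻¹.mulVec v‖ ≤ ℵ * ‖v‖)
    (hFx₀ : ‖(F' x₀)⁻¹.mulVec (F x₀)‖ ≤ δ)
    (hρ : 2 * ℵ * L * δ ≤ 1)
    (hball : closedBall x₀ (2 * δ / (1 + Real.sqrt (1 - 2 * ℵ * L * δ))) ⊆ D) :
    (∀ k : ℕ, (newtonStep F F')^[k] x₀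
        ∈ closedBall x₀ (2 * δ / (1 + Real.sqrt (1 - 2 * ℵ * L * δ))) ∧
      IsUnit (F' ((newtonStep F F')^[k] x₀)).det) ∧
    ∃ xstar ∈ closure
        (closedBall x₀ (2 * δ / (1 + Real.sqrt (1 - 2 * ℵ * L * δ)))),
      Tendsto (fun k => (newtonStep F F')^[k] x₀) atTop (nhds xstar) ∧
      F xstar = 0 := by
  have hradius : 2 * δ / (1 + √(1 - 2 * ℵ * L * δ)) = Kantorovich.radius (ℵ * L) δ := by
    rw [Kantorovich.radius, mul_assoc 2 ℵ L]
  rw [hradius] at hball ⊢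
  set B := closedBall x₀ (Kantorovich.radius (ℵ * L) δ)
  have hpert : ∀ x ∈ B, ∀ v, ‖v - ((F' x₀)⁻¹ * F' x) *ᵥ v‖ ≤ ℵ * L * ‖x - x₀‖ * ‖v‖ :=
    fun x hx v => calc
      _ = ‖(F' x₀)⁻¹ *ᵥ (F' x₀ *ᵥ v - F' x *ᵥ v)‖ := by
          rw [Matrix.mulVec_sub, Matrix.mulVec_mulVec, Matrix.nonsing_inv_mul _ hinv,
            Matrix.one_mulVec, Matrix.mulVec_mulVec]
      _ ≤ ℵ * (L * ‖x₀ - x‖ * ‖v‖) :=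
          (hbound _).trans (by gcongr; exact hLip _ hx₀ _ (hball hx) v)
      _ = ℵ * L * ‖x - x₀‖ * ‖v‖ := by rw [norm_sub_rev]; ring
  have hquad : ∀ x ∈ B, ∀ y ∈ B,
      ‖(F' x₀)⁻¹ *ᵥ (F y - F x - F' x *ᵥ (y - x))‖ ≤ ℵ * L / 2 * ‖y - x‖ ^ 2 :=
    fun x hx y hy => calc
      _ ≤ ℵ * ‖F y - F x - F' x *ᵥ (y - x)‖ := hbound _
      _ ≤ ℵ * (L / 2 * ‖y - x‖ ^ 2) := by
          gcongr
          exact (convex_closedBall x₀ _).norm_image_sub_sub_fderiv_le_of_lipschitz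
            (fun z hz => (hF z (hball hz)).hasFDerivWithinAt)
            (fun z hz w hw => hLip z (hball hz) w (hball hw)) hx hy
      _ = ℵ * L / 2 * ‖y - x‖ ^ 2 := by ring
  obtain ⟨hiter, xstar, hxstar, hlim, hzero⟩ :=
    newton_kantorovich (mul_pos hℵ hL) (by linarith) ((F' x₀).isUnit_nonsing_inv_det hinv)
      hpert hquad hδ hFx₀ (fun x hx => (hF x (hball hx)).continuousAt.continuousWithinAt)
  exact ⟨hiter, xstar, subset_closure hxstar, hlim, hzero⟩

/-- Kantorovich–Newton convergence, Gragg–Tapia form.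
Let `D ⊆ ℝⁿ` (with the sup norm) be open and convex, `F : D → ℝⁿ`
differentiable with Jacobian `F′` Lipschitz on `D` with constant `L` (in the
sense `‖(F′(x) − F′(y))v‖_∞ ≤ L‖x−y‖_∞‖v‖_∞`). If `x₀ ∈ D`, `F′(x₀)` is
invertible with `‖F′(x₀)⁻¹v‖_∞ ≤ ℵ‖v‖_∞`, `‖F′(x₀)⁻¹F(x₀)‖_∞ ≤ δ`,
`ρ = 2ℵLδ ≤ 1`, and the closed ball `B(x₀, t*) ⊆ D` where
`t* = 2δ/(1+√(1−ρ))`, then the Newton iterates exist (each Jacobian along the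
way is invertible), remain in `B(x₀, t*)`, and converge to a zero
`x* ∈ closure(B(x₀, t*))` of `F`. -/
theorem stmt_16 {n : ℕ} (D : Set (Fin n → ℝ)) (hD : IsOpen D) (hDconv : Convex ℝ D)
    (F : (Fin n → ℝ) → (Fin n → ℝ)) (F' : (Fin n → ℝ) → Matrix (Fin n) (Fin n) ℝ)
    (hF : ∀ x ∈ D, HasFDerivAt F
      (LinearMap.toContinuousLinearMap ((F' x).mulVecLin)) x)
    (L : ℝ) (hL : 0 < L)
    (hLip : ∀ x ∈ D, ∀ y ∈ D, ∀ v : Fin n → ℝ,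
      ‖(F' x).mulVec v - (F' y).mulVec v‖ ≤ L * ‖x - y‖ * ‖v‖)
    (x₀ : Fin n → ℝ) (hx₀ : x₀ ∈ D)
    (hinv : IsUnit (F' x₀).det)
    (ℵ δ : ℝ) (hℵ : 0 < ℵ) (hδ : 0 < δ)
    (hbound : ∀ v : Fin n → ℝ, ‖(F' x₀)⁻¹.mulVec v‖ ≤ ℵ * ‖v‖)
    (hFx₀ : ‖(F' x₀)⁻¹.mulVec (F x₀)‖ ≤ δ)
    (hρ : 2 * ℵ * L * δ ≤ 1)
    (hball : closedBall x₀ (2 * δ / (1 + Real.sqrt (1 - 2 * ℵ * L * δ))) ⊆ D) :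
    (∀ k : ℕ, (newtonStep F F')^[k] x₀
        ∈ closedBall x₀ (2 * δ / (1 + Real.sqrt (1 - 2 * ℵ * L * δ))) ∧
      IsUnit (F' ((newtonStep F F')^[k] x₀)).det) ∧
    ∃ xstar ∈ closure
        (closedBall x₀ (2 * δ / (1 + Real.sqrt (1 - 2 * ℵ * L * δ)))),
      Tendsto (fun k => (newtonStep F F')^[k] x₀) atTop (nhds xstar) ∧
      F xstar = 0 :=
  stmt_16_general D F F' hF L hL hLip x₀ hx₀ hinv ℵ δ hℵ hδ hbound hFx₀ hρ hball
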